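/- arXiv:1904.07194 — 2 statements merged into one kernel-verified Lean document; each statement's English description precedes it below -/
import Mathlib

section
/- Under the hypotheses of the SSP integrating factor Runge–Kutta theorem — α_{i,j} ≥ 0, β_{i,j} ≥ 0 with Σ_{j=0}^{i−1} α_{i,j} = 1 and β_{i,j} = 0 whenever α_{i,j} = 0, non-decreasing abscissas 0 = c_0 ≤ c_1 ≤ ⋯ ≤ c_s, L satisfying the exponential monotonicity condition, N satisfying the forward-Euler condition with step bound h_FE > 0, and Δt ≥ 0 with β_{i,j} Δt ≤ α_{i,j} h_FE for all i, j — every internal stage of the method u^{(0)} = u^n, u^{(i)} = Σ_{j=0}^{i−1} exp((c_i − c_j) Δt • L)(α_{i,j} • u^{(j)} + (Δt β_{i,j}) • N(u^{(j)})) satisfies the strong stability property f(u^{(i)}) ≤ f(u^n) for every i = 0, 1, …, s. -/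
/-!
Write each stage in Shu–Osher form as a convex combination with weights `α i j`:
when `α i j > 0` the `j`-th term is `α i j • exp(τ • L) (U j + (Δt * β i j / α i j) • N (U j))`
with `τ = (c i - c j) * Δt ≥ 0` (monotone abscissas), i.e. a forward-Euler step of size at most
`hFE` followed by an exponential step, neither of which increases `f`; when `α i j = 0` the
term vanishes. Jensen's inequality for the convex `f` then bounds `f (U i)` by the values at
earlier stages, and strong induction on `i` finishes.
-/

open Finset

section

variable {E : Type*} [NormedAddCommGroup E] [NormedSpace ℝ E]

def ExpMonotone (f : E → ℝ) (L : E →L[ℝ] E) : Prop :=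
  ∀ τ : ℝ, 0 ≤ τ → ∀ u : E, f (NormedSpace.exp (τ • L) u) ≤ f u

def ForwardEulerStable (f : E → ℝ) (N : E → E) (hFE : ℝ) : Prop :=
  ∀ u : E, ∀ τ : ℝ, 0 ≤ τ → τ ≤ hFE → f (u + τ • N u) ≤ f u

end

theorem ConvexOn.map_sum_le_of_forall_le {𝕜 E β ι : Type*} [Field 𝕜] [LinearOrder 𝕜]
    [IsStrictOrderedRing 𝕜] [AddCommGroup E] [AddCommGroup β] [PartialOrder β]
    [IsOrderedAddMonoid β] [Module 𝕜 E] [Module 𝕜 β] [IsStrictOrderedModule 𝕜 β]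
    {s : Set E} {f : E → β} {t : Finset ι} {w : ι → 𝕜} {p : ι → E} {M : β}
    (hf : ConvexOn 𝕜 s f) (h₀ : ∀ i ∈ t, 0 ≤ w i) (h₁ : ∑ i ∈ t, w i = 1)
    (hmem : ∀ i ∈ t, p i ∈ s) (hM : ∀ i ∈ t, f (p i) ≤ M) :
    f (∑ i ∈ t, w i • p i) ≤ M :=
  calc f (∑ i ∈ t, w i • p i) ≤ ∑ i ∈ t, w i • f (p i) := hf.map_sum_le h₀ h₁ hmem
    _ ≤ ∑ i ∈ t, w i • M := sum_le_sum fun i hi => smul_le_smul_of_nonneg_left (hM i hi) (h₀ i hi)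
    _ = M := by rw [← sum_smul, h₁, one_smul]

theorem map_smul_add_smul_eq_smul_map_add_div_smul {𝕜 E F G : Type*} [Field 𝕜]
    [AddCommGroup E] [Module 𝕜 E] [AddCommGroup F] [Module 𝕜 F] [FunLike G E F]
    [LinearMapClass G 𝕜 E F] (T : G) {a b : 𝕜} (hab : a = 0 → b = 0) (u v : E) :
    T (a • u + b • v) = a • T (u + (b / a) • v) := by
  rcases eq_or_ne a 0 with rfl | ha
  · simp [hab rfl]
  · rw [← map_smul, smul_add, smul_smul, mul_div_cancel₀ _ ha]

section

variable {E : Type*} [NormedAddCommGroup E] [NormedSpace ℝ E]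
  {f : E → ℝ} {L : E →L[ℝ] E} {N : E → E} {hFE : ℝ}

theorem ConvexOn.map_sum_exp_forwardEuler_le (hf : ConvexOn ℝ Set.univ f)
    (hL : ExpMonotone f L) (hN : ForwardEulerStable f N hFE) (hFE_pos : 0 < hFE)
    {ι : Type*} {t : Finset ι} {a b τ : ι → ℝ} {x : ι → E} {M : ℝ}
    (ha : ∀ j ∈ t, 0 ≤ a j) (hb : ∀ j ∈ t, 0 ≤ b j) (ha_sum : ∑ j ∈ t, a j = 1)
    (hab : ∀ j ∈ t, a j = 0 → b j = 0) (hba : ∀ j ∈ t, b j ≤ a j * hFE)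
    (hτ : ∀ j ∈ t, 0 ≤ τ j) (hx : ∀ j ∈ t, f (x j) ≤ M) :
    f (∑ j ∈ t, NormedSpace.exp (τ j • L) (a j • x j + b j • N (x j))) ≤ M := by
  have hstep : ∀ j ∈ t, b j / a j ≤ hFE := fun j hj => by
    rcases (ha j hj).eq_or_lt with h | h
    · simp [← h, hFE_pos.le]
    · rw [div_le_iff₀ h, mul_comm]
      exact hba j hj
  rw [sum_congr rfl fun j hj => map_smul_add_smul_eq_smul_map_add_div_smul _ (hab j hj) _ _]
  refine hf.map_sum_le_of_forall_le ha ha_sum (fun _ _ => trivial) fun j hj => ?_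
  calc f (NormedSpace.exp (τ j • L) (x j + (b j / a j) • N (x j)))
      ≤ f (x j + (b j / a j) • N (x j)) := hL _ (hτ j hj) _
    _ ≤ f (x j) := hN _ _ (div_nonneg (hb j hj) (ha j hj)) (hstep j hj)
    _ ≤ M := hx j hj

end

theorem ssp_integratingFactor_rungeKutta_stages_general
    {E : Type*} [NormedAddCommGroup E] [NormedSpace ℝ E]
    (f : E → ℝ) (hf_conv : ConvexOn ℝ Set.univ f)
    (L : E →L[ℝ] E) (N : E → E)
    (hFE : ℝ) (hFE_pos : 0 < hFE)
    (hL : ∀ (τ : ℝ), 0 ≤ τ → ∀ u : E, f (NormedSpace.exp (τ • L) u) ≤ f u)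
    (hN : ∀ u : E, ∀ τ : ℝ, 0 ≤ τ → τ ≤ hFE → f (u + τ • N u) ≤ f u)
    (s : ℕ)
    (α β : ℕ → ℕ → ℝ)
    (hα_nonneg : ∀ i j, 1 ≤ i → i ≤ s → j < i → 0 ≤ α i j)
    (hβ_nonneg : ∀ i j, 1 ≤ i → i ≤ s → j < i → 0 ≤ β i j)
    (hα_sum : ∀ i, 1 ≤ i → i ≤ s → ∑ j ∈ Finset.range i, α i j = 1)
    (hβ_zero : ∀ i j, 1 ≤ i → i ≤ s → j < i → α i j = 0 → β i j = 0)
    (c : ℕ → ℝ) (hc_mono : ∀ j, j < s → c j ≤ c (j + 1))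
    (un : E) (Δt : ℝ) (hΔt : 0 ≤ Δt)
    (hstep : ∀ i j, 1 ≤ i → i ≤ s → j < i → β i j * Δt ≤ α i j * hFE)
    (U : ℕ → E) (hU0 : U 0 = un)
    (hU : ∀ i, 1 ≤ i → i ≤ s →
      U i = ∑ j ∈ Finset.range i,
        NormedSpace.exp (((c i - c j) * Δt) • L)
          (α i j • U j + (Δt * β i j) • N (U j))) :
    ∀ i, i ≤ s → f (U i) ≤ f un := by
  have hc : MonotoneOn c (Set.Iic s) :=
    monotoneOn_of_le_add_one Set.ordConnected_Iic fun j _ _ hj => hc_mono j hj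
  intro i
  induction i using Nat.strong_induction_on with
  | _ i ih =>
    intro his
    rcases Nat.eq_zero_or_pos i with rfl | hi
    · rw [hU0]
    rw [hU i hi his]
    refine hf_conv.map_sum_exp_forwardEuler_le hL hN hFE_pos
      (fun j hj => hα_nonneg i j hi his (mem_range.1 hj))
      (fun j hj => mul_nonneg hΔt (hβ_nonneg i j hi his (mem_range.1 hj))) (hα_sum i hi his)
      (fun j hj h0 => by rw [hβ_zero i j hi his (mem_range.1 hj) h0, mul_zero])
      (fun j hj => (mul_comm Δt _).trans_le (hstep i j hi his (mem_range.1 hj)))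
      (fun j hj => ?_) (fun j hj => ih j (mem_range.1 hj) ((mem_range.1 hj).le.trans his))
    have hji : j ≤ i := (mem_range.1 hj).le
    exact mul_nonneg (sub_nonneg.2 (hc (hji.trans his) his hji)) hΔt

/-- **SSP integrating factor Runge–Kutta methods with non-decreasing abscissas.**
If the explicit Runge–Kutta method in Shu–Osher form (coefficients `α, β ≥ 0`,
row sums of `α` equal to `1`, `β i j = 0` whenever `α i j = 0`) has non-decreasing
abscissas `0 = c 0 ≤ c 1 ≤ ⋯ ≤ c s`, `L` satisfies the exponential monotonicity
condition, `N` satisfies the forward-Euler condition with step bound `hFE > 0`,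
and `β i j * Δt ≤ α i j * hFE` for all stages, then the integrating factor
Runge–Kutta method is strongly stable at every internal stage: `f (U i) ≤ f uⁿ` for all `i ≤ s`. -/
theorem ssp_integratingFactor_rungeKutta_stages
    {E : Type*} [NormedAddCommGroup E] [NormedSpace ℝ E] [FiniteDimensional ℝ E]
    (f : E → ℝ) (hf_cont : Continuous f) (hf_conv : ConvexOn ℝ Set.univ f)
    (L : E →L[ℝ] E) (N : E → E)
    (hFE : ℝ) (hFE_pos : 0 < hFE)
    (hL : ∀ (τ : ℝ), 0 ≤ τ → ∀ u : E, f (NormedSpace.exp (τ • L) u) ≤ f u)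
    (hN : ∀ u : E, ∀ τ : ℝ, 0 ≤ τ → τ ≤ hFE → f (u + τ • N u) ≤ f u)
    (s : ℕ) (hs : 1 ≤ s)
    (α β : ℕ → ℕ → ℝ)
    (hα_nonneg : ∀ i j, 1 ≤ i → i ≤ s → j < i → 0 ≤ α i j)
    (hβ_nonneg : ∀ i j, 1 ≤ i → i ≤ s → j < i → 0 ≤ β i j)
    (hα_sum : ∀ i, 1 ≤ i → i ≤ s → ∑ j ∈ Finset.range i, α i j = 1)
    (hβ_zero : ∀ i j, 1 ≤ i → i ≤ s → j < i → α i j = 0 → β i j = 0)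
    (c : ℕ → ℝ) (hc0 : c 0 = 0) (hc_mono : ∀ j, j < s → c j ≤ c (j + 1))
    (un : E) (Δt : ℝ) (hΔt : 0 ≤ Δt)
    (hstep : ∀ i j, 1 ≤ i → i ≤ s → j < i → β i j * Δt ≤ α i j * hFE)
    (U : ℕ → E) (hU0 : U 0 = un)
    (hU : ∀ i, 1 ≤ i → i ≤ s →
      U i = ∑ j ∈ Finset.range i,
        NormedSpace.exp (((c i - c j) * Δt) • L)
          (α i j • U j + (Δt * β i j) • N (U j))) :
    ∀ i, i ≤ s → f (U i) ≤ f un :=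
  ssp_integratingFactor_rungeKutta_stages_general f hf_conv L N hFE hFE_pos hL hN s α β hα_nonneg
    hβ_nonneg hα_sum hβ_zero c hc_mono un Δt hΔt hstep U hU0 hU
end

section
/- Let k ≥ 1 and let α_l ≥ 0, β_l ≥ 0 (l = 1, …, k) satisfy Σ_{l=1}^{k} α_l = 1 and β_l = 0 whenever α_l = 0. Suppose F : E → E satisfies the forward-Euler condition with step bound h_FE > 0. Given previous steps u^{n−k+1}, …, u^n ∈ E and Δt ≥ 0 with β_l Δt ≤ α_l h_FE for all l (i.e. Δt ≤ C h_FE with C = min_{β_l≠0} α_l/β_l), define the explicit multi-step update u^{n+1} = Σ_{l=1}^{k} (α_l • u^{n−k+l} + (Δt β_l) • F(u^{n−k+l})). Then f(u^{n+1}) ≤ max_{l=1,…,k} f(u^{n−k+l}). -/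
/-!
Where `α l > 0`, the `l`-th term of the update is `α l` times the forward-Euler step from `u l`
with step size `Δt β l / α l ≤ hFE`, which does not increase `f`; where `α l = 0` the term
vanishes. So `uⁿ⁺¹` is a convex combination of points at which `f` is at most `f (u l)`, and
Jensen's inequality bounds `f uⁿ⁺¹` by one of these values.
-/

open Finset

def ForwardEulerCondition {E : Type*} [AddCommGroup E] [Module ℝ E] (f : E → ℝ) (F : E → E)
    (h : ℝ) : Prop :=
  ∀ u : E, ∀ τ : ℝ, 0 ≤ τ → τ ≤ h → f (u + τ • F u) ≤ f u

theorem smul_add_smul_eq_smul_add_div_smul {K E : Type*} [Field K] [AddCommGroup E] [Module K E]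
    {a b : K} (hab : a = 0 → b = 0) (x y : E) :
    a • x + b • y = a • (x + (b / a) • y) := by
  rcases eq_or_ne a 0 with rfl | ha
  · simp [hab rfl]
  · rw [smul_add, smul_smul, mul_div_cancel₀ b ha]

namespace ForwardEulerCondition

variable {E : Type*} [AddCommGroup E] [Module ℝ E] {f : E → ℝ} {F : E → E} {h : ℝ}

theorem apply_add_div_smul_le (hF : ForwardEulerCondition f F h) {a b : ℝ} (ha : 0 ≤ a)
    (hb : 0 ≤ b) (hba : b ≤ a * h) (u : E) :
    f (u + (b / a) • F u) ≤ f u := by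
  rcases ha.eq_or_lt with rfl | ha
  · simp
  · exact hF u _ (div_nonneg hb ha.le) ((div_le_iff₀' ha).2 hba)

theorem exists_apply_sum_le {ι : Type*} (hf : ConvexOn ℝ Set.univ f)
    (hF : ForwardEulerCondition f F h) {s : Finset ι} {α b : ι → ℝ}
    (hα_nonneg : ∀ i ∈ s, 0 ≤ α i) (hα_sum : ∑ i ∈ s, α i = 1) (hb_nonneg : ∀ i ∈ s, 0 ≤ b i)
    (hb_le : ∀ i ∈ s, b i ≤ α i * h) (hb_zero : ∀ i ∈ s, α i = 0 → b i = 0) (u : ι → E) :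
    ∃ i ∈ s, f (∑ i ∈ s, (α i • u i + b i • F (u i))) ≤ f (u i) := by
  set v : ι → E := fun i ↦ u i + (b i / α i) • F (u i)
  have hsum : ∑ i ∈ s, (α i • u i + b i • F (u i)) = s.centerMass α v := by
    rw [centerMass_eq_of_sum_1 _ _ hα_sum]
    exact sum_congr rfl fun i hi ↦ smul_add_smul_eq_smul_add_div_smul (hb_zero i hi) _ _
  obtain ⟨i, hi, hle⟩ := hf.exists_ge_of_centerMass hα_nonneg (by rw [hα_sum]; exact one_pos)
    fun _ _ ↦ Set.mem_univ _
  exact ⟨i, hi, hsum ▸ hle.trans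
    (hF.apply_add_div_smul_le (hα_nonneg i hi) (hb_nonneg i hi) (hb_le i hi) (u i))⟩

end ForwardEulerCondition

theorem ssp_multiStep_general
    {E : Type*} [NormedAddCommGroup E] [NormedSpace ℝ E]
    (f : E → ℝ) (hf_conv : ConvexOn ℝ Set.univ f)
    (F : E → E)
    (hFE : ℝ)
    (hF : ∀ u : E, ∀ τ : ℝ, 0 ≤ τ → τ ≤ hFE → f (u + τ • F u) ≤ f u)
    (k : ℕ) (hk : 1 ≤ k)
    (α β : ℕ → ℝ)
    (hα_nonneg : ∀ l, 1 ≤ l → l ≤ k → 0 ≤ α l)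
    (hβ_nonneg : ∀ l, 1 ≤ l → l ≤ k → 0 ≤ β l)
    (hα_sum : ∑ l ∈ Finset.Icc 1 k, α l = 1)
    (hβ_zero : ∀ l, 1 ≤ l → l ≤ k → α l = 0 → β l = 0)
    (u : ℕ → E) (Δt : ℝ) (hΔt : 0 ≤ Δt)
    (hstep : ∀ l, 1 ≤ l → l ≤ k → β l * Δt ≤ α l * hFE)
    (unext : E)
    (hunext : unext = ∑ l ∈ Finset.Icc 1 k,
      (α l • u l + (Δt * β l) • F (u l))) :
    f unext ≤ (Finset.Icc 1 k).sup' (Finset.nonempty_Icc.mpr hk)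
      (fun l => f (u l)) := by
  have onIcc {P : ℕ → Prop} (hP : ∀ l, 1 ≤ l → l ≤ k → P l) : ∀ l ∈ Icc 1 k, P l :=
    fun l hl ↦ hP l (mem_Icc.1 hl).1 (mem_Icc.1 hl).2
  have hFE_cond : ForwardEulerCondition f F hFE := hF
  obtain ⟨l, hl, hle⟩ := hFE_cond.exists_apply_sum_le hf_conv (b := fun l ↦ Δt * β l)
    (onIcc hα_nonneg) hα_sum (fun l hl ↦ mul_nonneg hΔt (onIcc hβ_nonneg l hl))
    (fun l hl ↦ (mul_comm Δt _).trans_le (onIcc hstep l hl))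
    (fun l hl hαl ↦ by rw [onIcc hβ_zero l hl hαl, mul_zero]) u
  exact hunext ▸ hle.trans (le_sup' (fun l ↦ f (u l)) hl)

/-- **Strong stability preservation of explicit linear multi-step methods.**
If the `k`-step method has coefficients `α l, β l ≥ 0` with `∑ α l = 1` and
`β l = 0` whenever `α l = 0`, `F` satisfies the forward-Euler condition with
step bound `hFE > 0`, and `β l * Δt ≤ α l * hFE` for all `l`, then the update
`uⁿ⁺¹ = ∑ l, (α l • u l + Δt β l • F (u l))` satisfies
`f uⁿ⁺¹ ≤ max_l f (u l)`.  Here `u l` denotes the previous step `u^{n-k+l}`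
for `l = 1, …, k`. -/
theorem ssp_multiStep
    {E : Type*} [NormedAddCommGroup E] [NormedSpace ℝ E] [FiniteDimensional ℝ E]
    (f : E → ℝ) (hf_cont : Continuous f) (hf_conv : ConvexOn ℝ Set.univ f)
    (F : E → E)
    (hFE : ℝ) (hFE_pos : 0 < hFE)
    (hF : ∀ u : E, ∀ τ : ℝ, 0 ≤ τ → τ ≤ hFE → f (u + τ • F u) ≤ f u)
    (k : ℕ) (hk : 1 ≤ k)
    (α β : ℕ → ℝ)
    (hα_nonneg : ∀ l, 1 ≤ l → l ≤ k → 0 ≤ α l)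
    (hβ_nonneg : ∀ l, 1 ≤ l → l ≤ k → 0 ≤ β l)
    (hα_sum : ∑ l ∈ Finset.Icc 1 k, α l = 1)
    (hβ_zero : ∀ l, 1 ≤ l → l ≤ k → α l = 0 → β l = 0)
    (u : ℕ → E) (Δt : ℝ) (hΔt : 0 ≤ Δt)
    (hstep : ∀ l, 1 ≤ l → l ≤ k → β l * Δt ≤ α l * hFE)
    (unext : E)
    (hunext : unext = ∑ l ∈ Finset.Icc 1 k,
      (α l • u l + (Δt * β l) • F (u l))) :
    f unext ≤ (Finset.Icc 1 k).sup' (Finset.nonempty_Icc.mpr hk)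
      (fun l => f (u l)) :=
  ssp_multiStep_general f hf_conv F hFE hF k hk α β hα_nonneg hβ_nonneg hα_sum hβ_zero u Δt hΔt
    hstep unext hunext
end
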